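/- arXiv:1309.6186 — 3 statements merged into one kernel-verified Lean document; each statement's English description precedes it below -/
import Mathlib

section
/- Let O_K be a discrete valuation ring with uniformizer π, let n > m ≥ 0, and let M = O_K^r ⊕ ⊕_{j=1}^s O_K/π^{m_j} with all m_j ≤ m. Then every element of Hom_{O_K}(M, O_K/π^n) is the sum of (the reduction of) an element of Hom_{O_K}(M, O_K) and an element of Hom_{O_K}(M, π^{n-m}O_K/π^n); equivalently, Hom(M, O_K/π^n) = Im[Hom(M,O_K) → Hom(M, O_K/π^n)] + Hom(M, O_K/π^n)[π^m]. -/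
/-!
Split `φ` along `M = P × T` with `P` free and `T` killed by `π ^ m`. The restriction of `φ` to
`P` lifts to `O`, since free modules are projective; the restriction to `T` is killed by
`π ^ m` because `T` is.
-/

open Module

theorem Module.isTorsionBy_quotient_span_singleton_of_dvd {R : Type*} [CommRing R] {a b : R}
    (h : b ∣ a) : IsTorsionBy R (R ⧸ Ideal.span {b}) a :=
  (isTorsionBy_quotient_iff _ a).mpr fun x => Ideal.mem_span_singleton.mpr (h.mul_right x)

theorem Module.IsTorsionBy.pi {R ι : Type*} {M : ι → Type*} [CommSemiring R]
    [∀ i, AddCommMonoid (M i)] [∀ i, Module R (M i)] {a : R}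
    (h : ∀ i, IsTorsionBy R (M i) a) : IsTorsionBy R (Π i, M i) a :=
  fun x => funext fun i => @h i (x i)

theorem LinearMap.exists_eq_comp_add_of_isTorsionBy {R P T N N' : Type*} [CommSemiring R]
    [AddCommMonoid P] [Module R P] [Projective R P] [AddCommMonoid T] [Module R T]
    [AddCommMonoid N] [Module R N] [AddCommMonoid N'] [Module R N']
    {f : N' →ₗ[R] N} (hf : Function.Surjective f) {a : R} (hT : IsTorsionBy R T a)
    (φ : P × T →ₗ[R] N) :
    ∃ (ψ : P × T →ₗ[R] N') (τ : P × T →ₗ[R] N), φ = f ∘ₗ ψ + τ ∧ a • τ = 0 := by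
  obtain ⟨h, hfh⟩ := projective_lifting_property f (φ ∘ₗ inl R P T) hf
  refine ⟨h ∘ₗ fst R P T, φ ∘ₗ inr R P T ∘ₗ snd R P T, ?_, ?_⟩
  · ext x <;> simp [← hfh, Prod.mk_zero_zero]
  · ext x
    · simp [Prod.mk_zero_zero]
    · simp [← map_smul, Prod.smul_mk, @hT x, Prod.mk_zero_zero]

theorem stmt_14_general {O : Type*} [CommRing O]
    (π : O)
    (m n : ℕ)
    (r s : ℕ) (mj : Fin s → ℕ) (hmj : ∀ j, mj j ≤ m)
    (φ : ((Fin r → O) × Π j : Fin s, O ⧸ Ideal.span {π ^ mj j}) →ₗ[O]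
      O ⧸ Ideal.span {π ^ n}) :
    ∃ (ψ : ((Fin r → O) × Π j : Fin s, O ⧸ Ideal.span {π ^ mj j}) →ₗ[O] O)
      (τ : ((Fin r → O) × Π j : Fin s, O ⧸ Ideal.span {π ^ mj j}) →ₗ[O]
        O ⧸ Ideal.span {π ^ n}),
      φ = (Ideal.span {π ^ n} : Ideal O).mkQ ∘ₗ ψ + τ ∧ π ^ m • τ = 0 :=
  LinearMap.exists_eq_comp_add_of_isTorsionBy (Submodule.mkQ_surjective _)
    (IsTorsionBy.pi fun j => isTorsionBy_quotient_span_singleton_of_dvd (pow_dvd_pow π (hmj j)))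
    φ

theorem stmt_14 {O : Type*} [CommRing O] [IsDomain O] [IsDiscreteValuationRing O]
    (π : O) (hπ : Irreducible π)
    (m n : ℕ) (hmn : m < n)
    (r s : ℕ) (mj : Fin s → ℕ) (hmj : ∀ j, mj j ≤ m)
    (φ : ((Fin r → O) × Π j : Fin s, O ⧸ Ideal.span {π ^ mj j}) →ₗ[O]
      O ⧸ Ideal.span {π ^ n}) :
    ∃ (ψ : ((Fin r → O) × Π j : Fin s, O ⧸ Ideal.span {π ^ mj j}) →ₗ[O] O)
      (τ : ((Fin r → O) × Π j : Fin s, O ⧸ Ideal.span {π ^ mj j}) →ₗ[O]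
        O ⧸ Ideal.span {π ^ n}),
      φ = (Ideal.span {π ^ n} : Ideal O).mkQ ∘ₗ ψ + τ ∧ π ^ m • τ = 0 :=
  stmt_14_general π m n r s mj hmj φ
end

section
/- Let A be a Noetherian one-dimensional local integral domain whose normalization Ã is finite over A (e.g. A Henselian excellent). Let f: X' → X = Spec A be the blow-up of X at the closed point. Then f is a finite morphism, and f is an isomorphism if and only if A is normal (i.e. integrally closed in its fraction field). -/
/-!
Every element of the blow-up ring `D` stabilises a nonzero finitely generated ideal `mⁿ`, hence is
integral over `A`. So `D` lies in the finite `A`-module `Ã`, which gives finiteness, and `D = A`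
when `A` is normal. Conversely, `D = A` says `(m : m) = A`, and in a one-dimensional Noetherian
local domain this forces `m` to be principal, so `A` is a discrete valuation ring.
-/

open IsLocalRing

theorem isIntegral_of_forall_mul_mem_ideal {A K : Type*} [CommRing A] [CommRing K] [IsDomain K]
    [Algebra A K] [FaithfulSMul A K] {I : Ideal A} (hI : I.FG) (hI0 : I ≠ ⊥) {z : K}
    (hz : ∀ x ∈ I, ∃ w ∈ I, z * algebraMap A K x = algebraMap A K w) : IsIntegral A z := by
  refine isIntegral_of_smul_mem_submodule (Submodule.map (Algebra.linearMap A K) I) ?_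
    (Submodule.FG.map _ hI) z ?_
  · rw [Ne, ← Submodule.map_bot (Algebra.linearMap A K)]
    exact (Submodule.map_injective_of_injective (FaithfulSMul.algebraMap_injective A K)).ne hI0
  · rintro _ ⟨x, hx, rfl⟩
    obtain ⟨w, hw, hzw⟩ := hz x hx
    exact ⟨w, hw, hzw.symm⟩

theorem Subalgebra.finite_of_le {A B : Type*} [CommRing A] [IsNoetherianRing A] [Ring B]
    [Algebra A B] {S T : Subalgebra A B} (h : S ≤ T) [Module.Finite A T] : Module.Finite A S :=
  Module.Finite.of_injective (Subalgebra.inclusion h).toLinearMap (Subalgebra.inclusion_injective h)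

section LocalRing

variable {A : Type*} [CommRing A] [IsLocalRing A]

theorem IsLocalRing.maximalIdeal_mem_minimalPrimes_span_singleton [Ring.DimensionLEOne A] {a : A}
    (ha : a ∈ maximalIdeal A) (ha0 : a ≠ 0) : maximalIdeal A ∈ (Ideal.span {a}).minimalPrimes := by
  refine ⟨⟨inferInstance, (Ideal.span_singleton_le_iff_mem _).2 ha⟩, fun p ⟨hp, hap⟩ _ => ?_⟩
  have hp0 : p ≠ ⊥ := fun h => ha0 (by simpa [h] using hap)
  exact (eq_maximalIdeal (Ring.DimensionLEOne.maximalOfPrime hp0 hp)).ge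

theorem IsLocalRing.exists_maximalIdeal_eq_colon [IsNoetherianRing A] [Ring.DimensionLEOne A]
    {a : A} (ha : a ∈ maximalIdeal A) (ha0 : a ≠ 0) :
    ∃ b : A, maximalIdeal A = (Ideal.span {a}).colon {b} := by
  apply Submodule.exists_eq_colon_of_mem_minimalPrimes (x := (1 : A))
  convert maximalIdeal_mem_minimalPrimes_span_singleton ha ha0
  ext
  simp [Submodule.mem_colon_singleton]

theorem IsLocalRing.maximalIdeal_eq_span_of_mul_eq_mul_unit [IsDomain A] {a b x₀ u : A}
    (ha0 : a ≠ 0) (hb : ∀ x ∈ maximalIdeal A, a ∣ b * x) (hx₀ : x₀ ∈ maximalIdeal A)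
    (hu : IsUnit u) (h : b * x₀ = a * u) : maximalIdeal A = Ideal.span {x₀} := by
  refine le_antisymm (fun x hx => ?_) ((Ideal.span_singleton_le_iff_mem _).2 hx₀)
  obtain ⟨c, hc⟩ := hb x hx
  have hux : u * x = c * x₀ := mul_left_cancel₀ ha0 (by linear_combination x₀ * hc - x * h)
  exact Ideal.mem_span_singleton.2 (hu.dvd_mul_left.1 ⟨c, by rw [hux, mul_comm]⟩)

/-- If `z m ⊆ m` forces `z ∈ A`, then `m` is principal: for `a ∈ m` and `b` with `m = (a) : b`,
the element `z = b / a` satisfies `z m ⊆ A` but `z ∉ A`, so `z m ⊄ m`, i.e. `z m = A`. -/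
theorem IsLocalRing.isPrincipal_maximalIdeal_of_forall_mul_mem [IsNoetherianRing A] [IsDomain A]
    [Ring.DimensionLEOne A] {K : Type*} [Field K] [Algebra A K] [IsFractionRing A K]
    (hm : maximalIdeal A ≠ ⊥)
    (h : ∀ z : K, (∀ x ∈ maximalIdeal A, ∃ w ∈ maximalIdeal A,
      z * algebraMap A K x = algebraMap A K w) → z ∈ Set.range (algebraMap A K)) :
    (maximalIdeal A).IsPrincipal := by
  obtain ⟨a, ha, ha0⟩ := Submodule.exists_mem_ne_zero_of_ne_bot hm
  have hφa : algebraMap A K a ≠ 0 := IsFractionRing.to_map_eq_zero_iff.not.2 ha0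
  obtain ⟨b, hb⟩ := exists_maximalIdeal_eq_colon ha ha0
  have hba : ∀ x ∈ maximalIdeal A, a ∣ b * x := fun x hx => by
    rw [hb, Submodule.mem_colon_singleton, smul_eq_mul, mul_comm] at hx
    exact Ideal.mem_span_singleton.1 hx
  have hab : ¬ a ∣ b := fun hdvd => (maximalIdeal.isMaximal A).ne_top <| by
    rw [hb, Ideal.eq_top_iff_one, Submodule.mem_colon_singleton, one_smul]
    exact Ideal.mem_span_singleton.2 hdvd
  obtain ⟨x₀, hx₀, hx₀m⟩ : ∃ x₀ ∈ maximalIdeal A, ∀ w ∈ maximalIdeal A, b * x₀ ≠ a * w := by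
    by_contra! hcon
    obtain ⟨y, hy⟩ := h (algebraMap A K b / algebraMap A K a) fun x hx => by
      obtain ⟨w, hw, hbw⟩ := hcon x hx
      refine ⟨w, hw, ?_⟩
      rw [div_mul_eq_mul_div, div_eq_iff hφa, ← map_mul, ← map_mul, hbw, mul_comm]
    refine hab ⟨y, IsFractionRing.injective A K ?_⟩
    rw [map_mul, hy, mul_div_cancel₀ _ hφa]
  obtain ⟨u, hu⟩ := hba x₀ hx₀
  have hu_unit : IsUnit u := by
    by_contra hu'
    exact hx₀m u ((mem_maximalIdeal u).2 hu') hu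
  exact ⟨x₀, maximalIdeal_eq_span_of_mul_eq_mul_unit ha0 hba hx₀ hu_unit hu⟩

end LocalRing

theorem stmt_17 (A : Type*) [CommRing A] [IsDomain A] [IsNoetherianRing A]
    [HenselianLocalRing A] [Ring.DimensionLEOne A] (hnf : ¬ IsField A)
    [Module.Finite A (integralClosure A (FractionRing A))]
    (D : Subalgebra A (FractionRing A))
    -- `D` is the coordinate ring of the blow-up of `Spec A` at the closed point
    (hD : ∀ z : FractionRing A, z ∈ D ↔ ∃ n : ℕ, 0 < n ∧
      ∀ x ∈ (IsLocalRing.maximalIdeal A) ^ n, ∃ w ∈ (IsLocalRing.maximalIdeal A) ^ n,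
        z * algebraMap A (FractionRing A) x = algebraMap A (FractionRing A) w) :
    Module.Finite A D ∧ (D = ⊥ ↔ IsIntegrallyClosed A) := by
  have hm : maximalIdeal A ≠ ⊥ := fun h => hnf (isField_iff_maximalIdeal_eq.2 h)
  have hint : ∀ z ∈ D, IsIntegral A z := fun z hz => by
    obtain ⟨n, -, hn⟩ := (hD z).1 hz
    exact isIntegral_of_forall_mul_mem_ideal (IsNoetherian.noetherian _) (pow_ne_zero n hm) hn
  refine ⟨Subalgebra.finite_of_le (S := D) (T := integralClosure A _) hint,
    fun hbot => ?_, fun _ => ?_⟩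
  · have hprinc : (maximalIdeal A).IsPrincipal :=
      isPrincipal_maximalIdeal_of_forall_mul_mem hm fun z hz => by
        have hzD : z ∈ D := (hD z).2 ⟨1, one_pos, by simpa using hz⟩
        rwa [hbot, Algebra.mem_bot] at hzD
    have : IsDiscreteValuationRing A := ((IsDiscreteValuationRing.TFAE A hnf).out 0 4).2 hprinc
    infer_instance
  · exact eq_bot_iff.2 fun z hz =>
      Algebra.mem_bot.2 (IsIntegrallyClosed.isIntegral_iff.1 (hint z hz))
end

section
/- Let A be a Noetherian one-dimensional Henselian local integral domain with finite normalization. Define A_0 = A and let A_{i+1} be (the coordinate ring of) the blow-up of Spec A_i at its closed point. Then the sequence A_0 ⊆ A_1 ⊆ A_2 ⊆ ... stabilizes after finitely many steps, and its stable value equals the normalization Ã of A. -/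
/-!
Each blow-up contains the previous ring, and an element `z` of the blow-up of `C` multiplies
the nonzero finitely generated `A`-module `𝔪_C ^ n` into itself, so it is integral over `A`.
The rings `B i` thus form an ascending chain in the Noetherian `A`-module `Ã`, which
stabilizes at some `C = B N`, a one-dimensional Noetherian local domain equal to its own
blow-up. If `C` is not a field, choose `0 ≠ x ∈ 𝔪` and `k` with `𝔪 ^ (k + 1) ⊆ (x)` and
`y ∈ 𝔪 ^ k` with `y ∉ (x)`; then `z = y / x ∉ C` and `z 𝔪 ⊆ C`. Since `C` is its own
blow-up, `z` does not preserve `𝔪`, so `z a` is a unit for some `a ∈ 𝔪`, whence `𝔪 = (a)`.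
Thus `C` is a discrete valuation ring, hence integrally closed, and `C = Ã`.
-/

/-- `IsClosedPointBlowup C D` says that the subalgebra `D` of the fraction field `K`
is the coordinate ring of the blow-up of `Spec C` at its closed point (the set of
nonunits of `C`, which is required to be an ideal, i.e. `C` is local). -/
def IsClosedPointBlowup {A K : Type*} [CommRing A] [Field K] [Algebra A K]
    (C D : Subalgebra A K) : Prop :=
  ∃ J : Ideal C, (∀ x : C, x ∈ J ↔ ¬ IsUnit x) ∧
    ∀ z : K, z ∈ D ↔ ∃ n : ℕ, 0 < n ∧
      ∀ x ∈ J ^ n, ∃ w ∈ J ^ n, z * (x : K) = (w : K)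

open IsLocalRing Ideal

section

variable {R K : Type*} [CommRing R] [Field K] [Algebra R K] [IsFractionRing R K]

theorem Ideal.exists_notMem_range_mul_mem_range [IsDomain R] {I : Ideal R} {x : R}
    (hx : x ≠ 0) {m : ℕ} (hle : I ^ (m + 1) ≤ span {x}) (hnle : ¬ I ^ m ≤ span {x}) :
    ∃ z : K, z ∉ (algebraMap R K).range ∧
      ∀ a ∈ I, z * algebraMap R K a ∈ (algebraMap R K).range := by
  obtain ⟨y, hyI, hyx⟩ := SetLike.not_le_iff_exists.mp hnle
  have hxK : algebraMap R K x ≠ 0 := IsFractionRing.to_map_ne_zero_of_mem_nonZeroDivisors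
    (mem_nonZeroDivisors_of_ne_zero hx)
  refine ⟨algebraMap R K y / algebraMap R K x, ?_, fun a ha => ?_⟩
  · rintro ⟨c, hc⟩
    rw [eq_div_iff hxK, ← map_mul] at hc
    exact hyx (mem_span_singleton'.mpr ⟨c, IsFractionRing.injective R K hc⟩)
  · obtain ⟨c, hc⟩ := mem_span_singleton'.mp (hle (pow_succ I m ▸ mul_mem_mul hyI ha))
    refine ⟨c, ?_⟩
    rw [div_mul_eq_mul_div, eq_div_iff hxK, ← map_mul, ← map_mul, hc]

theorem Ideal.eq_span_singleton_of_isUnit_mul {I : Ideal R} {a c : R} {z : K} (ha : a ∈ I)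
    (hc : IsUnit c) (hca : algebraMap R K c = z * algebraMap R K a)
    (hz : ∀ b ∈ I, z * algebraMap R K b ∈ (algebraMap R K).range) : I = span {a} := by
  refine le_antisymm (fun b hb => ?_) ((span_singleton_le_iff_mem I).mpr ha)
  obtain ⟨d, hd⟩ := hz b hb
  refine mem_span_singleton'.mpr ⟨↑hc.unit⁻¹ * d, ?_⟩
  have : c * b = d * a := IsFractionRing.injective R K (by simp only [map_mul, hca, hd]; ring)
  rw [mul_assoc, ← this, ← mul_assoc, hc.val_inv_mul, one_mul]

end

section

variable {R : Type*} [CommRing R] [IsNoetherianRing R] [IsLocalRing R] [Ring.DimensionLEOne R]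

theorem IsLocalRing.exists_maximalIdeal_pow_le_span_singleton {x : R} (hx : x ≠ 0) :
    ∃ n : ℕ, maximalIdeal R ^ n ≤ span {x} := by
  have hrad : maximalIdeal R ≤ (span {x}).radical := by
    rw [radical_eq_sInf]
    refine le_sInf fun P ⟨hxP, hP⟩ => ?_
    have hPbot : P ≠ ⊥ := fun h => hx (by simpa [h] using hxP (mem_span_singleton_self x))
    exact (eq_maximalIdeal (hP.isMaximal hPbot)).ge
  obtain ⟨k, hk⟩ := exists_radical_pow_le_of_fg (span {x}) (IsNoetherian.noetherian _)
  exact ⟨k, (pow_right_mono hrad k).trans hk⟩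

variable [IsDomain R] {K : Type*} [Field K] [Algebra R K] [IsFractionRing R K]

theorem IsLocalRing.exists_notMem_range_mul_mem_range (hR : ¬ IsField R) :
    ∃ z : K, z ∉ (algebraMap R K).range ∧
      ∀ a ∈ maximalIdeal R, z * algebraMap R K a ∈ (algebraMap R K).range := by
  classical
  obtain ⟨x, hxm, hx0⟩ := Submodule.exists_mem_ne_zero_of_ne_bot
    ((isField_iff_maximalIdeal_eq).not.mp hR)
  have hpow := exists_maximalIdeal_pow_le_span_singleton hx0
  obtain ⟨m, hm⟩ : ∃ m, Nat.find hpow = m + 1 := by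
    refine Nat.exists_eq_succ_of_ne_zero fun h0 => ?_
    have := Nat.find_spec hpow
    rw [h0, pow_zero, one_eq_top, top_le_iff, span_singleton_eq_top] at this
    exact (mem_maximalIdeal x).mp hxm this
  exact Ideal.exists_notMem_range_mul_mem_range hx0 (hm ▸ Nat.find_spec hpow)
    (Nat.find_min hpow (by omega))

theorem IsLocalRing.isIntegrallyClosed_of_forall_mul_mem
    (h : ∀ z : K, (∀ a ∈ maximalIdeal R, ∃ b ∈ maximalIdeal R,
      z * algebraMap R K a = algebraMap R K b) → z ∈ (algebraMap R K).range) :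
    IsIntegrallyClosed R := by
  have tfae := (tfae_of_isNoetherianRing_of_isLocalRing_of_isDomain R).out 4 3
  suffices (maximalIdeal R).IsPrincipal from (tfae.mp this).1
  by_cases hR : IsField R
  · exact ⟨0, by rw [(isField_iff_maximalIdeal_eq).mp hR, Submodule.span_zero_singleton]⟩
  obtain ⟨z, hzR, hz⟩ := exists_notMem_range_mul_mem_range (K := K) hR
  obtain ⟨a, ha, hza⟩ : ∃ a ∈ maximalIdeal R, ∀ b ∈ maximalIdeal R,
      z * algebraMap R K a ≠ algebraMap R K b := by
    by_contra! H
    exact hzR (h z H)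
  obtain ⟨c, hc⟩ := hz a ha
  have hcu : IsUnit c := by
    by_contra hcu
    exact hza c ((mem_maximalIdeal c).mpr hcu) hc.symm
  exact ⟨a, eq_span_singleton_of_isUnit_mul ha hcu hc hz⟩

end

namespace IsClosedPointBlowup

variable {A K : Type*} [CommRing A] [Field K] [Algebra A K] {C D : Subalgebra A K}

theorem le (h : IsClosedPointBlowup C D) : C ≤ D := by
  obtain ⟨J, -, hD⟩ := h
  intro z hz
  refine (hD z).mpr ⟨1, one_pos, fun x hx => ⟨⟨z, hz⟩ * x, ?_, rfl⟩⟩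
  rw [pow_one] at hx ⊢
  exact J.mul_mem_left _ hx

theorem isLocalRing (h : IsClosedPointBlowup C D) : IsLocalRing C := by
  obtain ⟨J, hJ, -⟩ := h
  refine .of_nonunits_add fun a b ha hb => ?_
  exact (hJ _).mp (J.add_mem ((hJ a).mpr ha) ((hJ b).mpr hb))

theorem mem_iff [IsLocalRing C] (h : IsClosedPointBlowup C D) {z : K} :
    z ∈ D ↔ ∃ n : ℕ, 0 < n ∧
      ∀ x ∈ maximalIdeal C ^ n, ∃ w ∈ maximalIdeal C ^ n, z * (x : K) = (w : K) := by
  obtain ⟨J, hJ, hD⟩ := h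
  obtain rfl : J = maximalIdeal C := by
    ext x
    rw [hJ, mem_maximalIdeal, mem_nonunits_iff]
  exact hD z

theorem le_integralClosure [IsNoetherian A C] (hC : ¬ IsField C) (h : IsClosedPointBlowup C D) :
    D ≤ integralClosure A K := by
  have := h.isLocalRing
  intro z hz
  obtain ⟨n, -, hzn⟩ := h.mem_iff.mp hz
  let N : Submodule A K := ((maximalIdeal C ^ n).restrictScalars A).map C.val.toLinearMap
  have hNfg : N.FG := (IsNoetherian.noetherian _).map _
  have hNne : N ≠ ⊥ := by
    have hm : maximalIdeal C ^ n ≠ ⊥ :=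
      pow_ne_zero _ ((isField_iff_maximalIdeal_eq).not.mp hC)
    rw [Ne, ← Submodule.map_bot C.val.toLinearMap]
    exact (Submodule.map_injective_of_injective Subtype.val_injective).ne
      ((Submodule.restrictScalars_eq_bot_iff A _ _).not.mpr hm)
  refine isIntegral_of_smul_mem_submodule N hNne hNfg z ?_
  rintro _ ⟨x, hx, rfl⟩
  obtain ⟨w, hw, hzw⟩ := hzn x hx
  exact ⟨w, hw, hzw.symm⟩

theorem eq_integralClosure [Nontrivial A] [Ring.DimensionLEOne A]
    [IsFractionRing A K] [IsNoetherian A C] (hC : C ≤ integralClosure A K)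
    (h : IsClosedPointBlowup C C) : C = integralClosure A K := by
  have := h.isLocalRing
  have : IsNoetherianRing C := isNoetherian_of_tower A ‹_›
  have : Algebra.IsIntegral A C := (Subalgebra.isIntegral_iff C).mpr hC
  have : Ring.DimensionLEOne C := .of_isIntegral A C
  have : IsIntegrallyClosed C := isIntegrallyClosed_of_forall_mul_mem (K := K) fun z hz =>
    ⟨⟨z, h.mem_iff.mpr ⟨1, one_pos, by simpa using hz⟩⟩, rfl⟩
  refine le_antisymm hC fun w hw => ?_
  obtain ⟨c, rfl⟩ := IsIntegrallyClosed.isIntegral_iff.mp (IsIntegral.tower_top (A := C) hw)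
  exact c.2

end IsClosedPointBlowup

namespace Subalgebra

variable {A K : Type*} [CommRing A] [Field K] [Algebra A K]

theorem not_isField_of_le_integralClosure [FaithfulSMul A K] (hA : ¬ IsField A)
    {C : Subalgebra A K} (hC : C ≤ integralClosure A K) : ¬ IsField C := by
  have : Algebra.IsIntegral A C := (isIntegral_iff C).mpr hC
  have hinj : Function.Injective (algebraMap A C) := fun a b hab =>
    FaithfulSMul.algebraMap_injective A K (congrArg Subtype.val hab)
  rwa [← Algebra.IsIntegral.isField_iff_isField hinj]

theorem exists_forall_ge_eq_of_le {S : Subalgebra A K} [IsNoetherian A S]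
    {B : ℕ → Subalgebra A K} (hB : Monotone B) (hBS : ∀ i, B i ≤ S) :
    ∃ N, ∀ i, N ≤ i → B i = B N := by
  let T : ℕ →o Submodule A S :=
    ⟨fun i => (toSubmodule (B i)).comap S.val.toLinearMap,
      fun i j hij => Submodule.comap_mono (hB hij)⟩
  obtain ⟨N, hN⟩ := monotone_stabilizes_iff_noetherian.mpr ‹_› T
  refine ⟨N, fun i hi => le_antisymm (fun z hz => ?_) (hB hi)⟩
  have hz' : (⟨z, hBS i hz⟩ : S) ∈ T i := hz
  exact (hN i hi ▸ hz' : _ ∈ T N)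

end Subalgebra

theorem stmt_18_general (A : Type*) [CommRing A] [IsDomain A] [IsNoetherianRing A]
    [Ring.DimensionLEOne A] (hnf : ¬ IsField A)
    [Module.Finite A (integralClosure A (FractionRing A))]
    (B : ℕ → Subalgebra A (FractionRing A)) (hB0 : B 0 = ⊥)
    (hstep : ∀ i : ℕ, IsClosedPointBlowup (B i) (B (i + 1))) :
    ∃ N : ℕ, (∀ i : ℕ, N ≤ i → B i = B N) ∧
      B N = integralClosure A (FractionRing A) := by
  have hint : ∀ i, B i ≤ integralClosure A (FractionRing A) := by
    intro i
    induction i with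
    | zero => exact hB0 ▸ bot_le
    | succ i ih =>
      have : IsNoetherian A (B i) := isNoetherian_of_le (Subalgebra.toSubmodule.monotone ih)
      exact (hstep i).le_integralClosure (Subalgebra.not_isField_of_le_integralClosure hnf ih)
  obtain ⟨N, hN⟩ :=
    Subalgebra.exists_forall_ge_eq_of_le (monotone_nat_of_le_succ fun i => (hstep i).le) hint
  have : IsNoetherian A (B N) := isNoetherian_of_le (Subalgebra.toSubmodule.monotone (hint N))
  exact ⟨N, hN, (hN (N + 1) N.le_succ ▸ hstep N).eq_integralClosure (hint N)⟩

theorem stmt_18 (A : Type*) [CommRing A] [IsDomain A] [IsNoetherianRing A]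
    [HenselianLocalRing A] [Ring.DimensionLEOne A] (hnf : ¬ IsField A)
    [Module.Finite A (integralClosure A (FractionRing A))]
    (B : ℕ → Subalgebra A (FractionRing A)) (hB0 : B 0 = ⊥)
    (hstep : ∀ i : ℕ, IsClosedPointBlowup (B i) (B (i + 1))) :
    ∃ N : ℕ, (∀ i : ℕ, N ≤ i → B i = B N) ∧
      B N = integralClosure A (FractionRing A) :=
  stmt_18_general A hnf B hB0 hstep
end
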